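/- arXiv:1210.3012 — 2 statements merged into one kernel-verified Lean document; each statement's English description precedes it below -/
import Mathlib

section
/- Let λ > 0 and μ' > 0 with ρ = λ/μ' satisfying ρ(H_n − H_{n−k}) < 1. Then the Pollaczek–Khinchin upper bound on the fork-join mean response time, U(n,k) = (H_n − H_{n−k})/μ' + λ[(H_{n,2} − H_{n−k,2}) + (H_n − H_{n−k})²] / (2μ'²(1 − ρ(H_n − H_{n−k}))), is at least the lower bound L(n,k) = (1/μ')[(H_n − H_{n−k}) + ρ·∑_{j=0}^{k−1} 1/((n−j)(n−j−ρ))], for all 1 ≤ k ≤ n, provided additionally ρ < n−k+1. -/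
open MeasureTheory ProbabilityTheory Finset Filter

/-- `m`-th harmonic number `∑_{j=1}^m 1/j`. -/
noncomputable def H (m : ℕ) : ℝ := ∑ j ∈ Finset.range m, (1 : ℝ) / (j + 1)

/-- Generalized harmonic number `∑_{j=1}^m 1/j²`. -/
noncomputable def H2 (m : ℕ) : ℝ := ∑ j ∈ Finset.range m, (1 : ℝ) / (j + 1) ^ 2

/-- The `k`-th order statistic (k-th smallest value, 1-indexed) of `X 1, ..., X n`. -/
noncomputable def orderStat {Ω : Type*} (n k : ℕ) (X : Fin n → Ω → ℝ) (ω : Ω) : ℝ :=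
  ((List.ofFn fun i => X i ω).mergeSort (· ≤ ·)).getD (k - 1) 0

/-
With `D = H n - H (n-k) = ∑_{j<k} 1/(n-j)` and `D₂ = H_{n,2} - H_{n-k,2} = ∑_{j<k} 1/(n-j)²`, the
claim reduces to `2 S (1 - ρ D) ≤ D₂ + D²` for `S = ∑_{j<k} 1/((n-j)(n-j-ρ))`. Termwise,
`1 - ρ D ≤ 1 - ρ/(n-j) = (n-j-ρ)/(n-j)`, so `S (1 - ρ D) ≤ D₂`, and `D₂ ≤ D²` since all terms
are nonnegative.
-/

lemma sum_range_sub_sum_range_tsub (g : ℝ → ℝ) {n k : ℕ} (hkn : k ≤ n) :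
    ∑ i ∈ range n, g (i + 1) - ∑ i ∈ range (n - k), g (i + 1)
      = ∑ j ∈ range k, g (n - j) := by
  induction k with
  | zero => simp
  | succ k ih =>
    have hsplit : n - k = n - (k + 1) + 1 := by omega
    have hcast : ((n - (k + 1) : ℕ) : ℝ) + 1 = n - k := by
      rw [Nat.cast_sub (by omega)]; push_cast; ring
    rw [sum_range_succ, ← ih (by omega), hsplit, sum_range_succ, hcast]
    ring

lemma H_sub_H {n k : ℕ} (hkn : k ≤ n) :
    H n - H (n - k) = ∑ j ∈ range k, 1 / ((n : ℝ) - j) :=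
  sum_range_sub_sum_range_tsub (fun x => 1 / x) hkn

lemma H2_sub_H2 {n k : ℕ} (hkn : k ≤ n) :
    H2 n - H2 (n - k) = ∑ j ∈ range k, (1 / ((n : ℝ) - j)) ^ 2 := by
  simp_rw [div_pow, one_pow]
  exact sum_range_sub_sum_range_tsub (fun x => 1 / x ^ 2) hkn

lemma sum_one_div_mul_sub_mul_le {ι : Type*} {s : Finset ι} {x : ι → ℝ} {ρ : ℝ}
    (hx : ∀ i ∈ s, 0 < x i) (hρ : 0 ≤ ρ) (hstab : ρ * ∑ i ∈ s, 1 / x i < 1) :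
    (∑ i ∈ s, 1 / (x i * (x i - ρ))) * (1 - ρ * ∑ i ∈ s, 1 / x i)
      ≤ ∑ i ∈ s, (1 / x i) ^ 2 := by
  rw [sum_mul]
  refine sum_le_sum fun i hi => ?_
  have hxi := hx i hi
  have hle : ρ * (1 / x i) ≤ ρ * ∑ j ∈ s, 1 / x j :=
    mul_le_mul_of_nonneg_left
      (single_le_sum (fun j hj => (one_div_pos.2 (hx j hj)).le) hi) hρ
  have hgap : 0 < x i - ρ := by
    have : ρ / x i < 1 := by rw [← mul_one_div]; linarith
    rw [div_lt_one hxi] at this; linarith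
  calc 1 / (x i * (x i - ρ)) * (1 - ρ * ∑ j ∈ s, 1 / x j)
      ≤ 1 / (x i * (x i - ρ)) * (1 - ρ * (1 / x i)) := by gcongr
    _ = (1 / x i) ^ 2 := by field_simp

theorem fork_join_upper_ge_lower_general (n k : ℕ) (hkn : k ≤ n)
    (lam μ' : ℝ) (hlam : 0 < lam) (hμ' : 0 < μ')
    (ρ : ℝ) (hρ : ρ = lam / μ')
    (hstab : ρ * (H n - H (n - k)) < 1) :
    (1 / μ') * ((H n - H (n - k))
        + ρ * ∑ j ∈ Finset.range k, 1 / (((n : ℝ) - j) * ((n : ℝ) - j - ρ)))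
      ≤ (H n - H (n - k)) / μ'
        + lam * ((H2 n - H2 (n - k)) + (H n - H (n - k)) ^ 2)
          / (2 * μ' ^ 2 * (1 - ρ * (H n - H (n - k)))) := by
  have hρ0 : 0 ≤ ρ := hρ ▸ by positivity
  have hlam_eq : lam = ρ * μ' := by rw [hρ, div_mul_cancel₀ _ hμ'.ne']
  have hx : ∀ j ∈ range k, (0 : ℝ) < n - j := fun j hj => by
    have : (j : ℝ) < n := by exact_mod_cast (mem_range.1 hj).trans_le hkn
    linarith
  rw [H_sub_H hkn] at hstab ⊢
  rw [H2_sub_H2 hkn, hlam_eq]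
  set D := ∑ j ∈ range k, 1 / ((n : ℝ) - j)
  set D₂ := ∑ j ∈ range k, (1 / ((n : ℝ) - j)) ^ 2
  set S := ∑ j ∈ range k, 1 / (((n : ℝ) - j) * ((n : ℝ) - j - ρ))
  have hS := sum_one_div_mul_sub_mul_le hx hρ0 hstab
  have hD2 := sum_sq_le_sq_sum_of_nonneg fun j hj => (one_div_pos.2 (hx j hj)).le
  have hgap : 0 < 1 - ρ * D := by linarith
  have hS_le : S ≤ (D₂ + D ^ 2) / (2 * (1 - ρ * D)) := by
    rw [le_div_iff₀ (by positivity)]; linarith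
  calc 1 / μ' * (D + ρ * S) = D / μ' + ρ / μ' * S := by ring
    _ ≤ D / μ' + ρ / μ' * ((D₂ + D ^ 2) / (2 * (1 - ρ * D))) := by gcongr
    _ = _ := by field_simp

theorem fork_join_upper_ge_lower (n k : ℕ) (hk : 1 ≤ k) (hkn : k ≤ n)
    (lam μ' : ℝ) (hlam : 0 < lam) (hμ' : 0 < μ')
    (ρ : ℝ) (hρ : ρ = lam / μ')
    (hstab : ρ * (H n - H (n - k)) < 1) (hρk : ρ < (n : ℝ) - k + 1) :
    (1 / μ') * ((H n - H (n - k))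
        + ρ * ∑ j ∈ Finset.range k, 1 / (((n : ℝ) - j) * ((n : ℝ) - j - ρ)))
      ≤ (H n - H (n - k)) / μ'
        + lam * ((H2 n - H2 (n - k)) + (H n - H (n - k)) ^ 2)
          / (2 * μ' ^ 2 * (1 - ρ * (H n - H (n - k)))) :=
  fork_join_upper_ge_lower_general n k hkn lam μ' hlam hμ' ρ hρ hstab
end

section
/- Let X_1,...,X_n be i.i.d. random variables with mean μ₀ and variance σ² < ∞. Then the expectation of the k-th order statistic satisfies E[X_{(k)}] ≤ μ₀ + σ·√((k−1)/(n−k+1)) for all 1 ≤ k ≤ n. -/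
/-
Fix a sample `y` with mean `ȳ` and put `a = y₍ₖ₎ - ȳ > 0`. At least `n - k + 1` of the centred
values `yᵢ - ȳ` are `≥ a`; as the centred values sum to zero, the at most `k - 1` others sum to at
most `-(n - k + 1) a`, and Cauchy–Schwarz on them gives `(n - k + 1) n a² ≤ (k - 1) ∑ (yᵢ - ȳ)²`.
As the mean minimizes squared deviations, `y₍ₖ₎ ≤ ȳ + √((k-1)/(n-k+1)) √(∑ (yᵢ - μ₀)² / n)` for
every sample. Taking expectations, `E ȳ = μ₀`, and Jensen's inequality for `√` bounds the
expectation of the last factor by `σ`.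
-/

open MeasureTheory ProbabilityTheory Finset Filter

namespace List

variable {α : Type*} [LinearOrder α] {l : List α}

theorem Pairwise.le_getElem_of_mem_drop (hl : l.Pairwise (· ≤ ·)) {j : ℕ} (hj : j < l.length)
    {b : α} (hb : b ∈ l.drop j) : l[j] ≤ b := by
  rw [drop_eq_getElem_cons hj] at hb
  rcases mem_cons.1 hb with rfl | hb
  · exact le_rfl
  · exact (pairwise_cons.1 ((drop_eq_getElem_cons hj) ▸ hl.drop (i := j))).1 b hb

theorem Pairwise.le_getElem_of_mem_take (hl : l.Pairwise (· ≤ ·)) {j : ℕ} (hj : j < l.length)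
    {a : α} (ha : a ∈ l.take j) : a ≤ l[j] := by
  rw [← take_append_drop j l, pairwise_append] at hl
  exact hl.2.2 a ha _ (drop_eq_getElem_cons hj ▸ mem_cons_self)

theorem Pairwise.length_sub_le_countP_getElem_le (hl : l.Pairwise (· ≤ ·)) {j : ℕ}
    (hj : j < l.length) : l.length - j ≤ l.countP (l[j] ≤ ·) :=
  calc l.length - j = (l.drop j).length := length_drop.symm
    _ = (l.drop j).countP (l[j] ≤ ·) :=
      (countP_eq_length.2 fun _ hb => decide_eq_true (hl.le_getElem_of_mem_drop hj hb)).symm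
    _ ≤ l.countP (l[j] ≤ ·) := (drop_sublist j l).countP_le

theorem Pairwise.getElem_le_iff (hl : l.Pairwise (· ≤ ·)) {j : ℕ} (hj : j < l.length) (c : α) :
    l[j] ≤ c ↔ j + 1 ≤ l.countP (· ≤ c) := by
  constructor
  · intro hc
    have htake : ∀ a ∈ l.take (j + 1), a ≤ c := by
      intro a ha
      rw [take_succ_eq_append_getElem hj, mem_append, mem_singleton] at ha
      rcases ha with ha | rfl
      · exact (hl.le_getElem_of_mem_take hj ha).trans hc
      · exact hc
    calc j + 1 = (l.take (j + 1)).length := by simp [hj]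
      _ = (l.take (j + 1)).countP (· ≤ c) :=
        (countP_eq_length.2 fun a ha => decide_eq_true (htake a ha)).symm
      _ ≤ l.countP (· ≤ c) := (take_sublist _ l).countP_le
  · intro hcount
    by_contra! hc
    have hdrop : (l.drop j).countP (· ≤ c) = 0 :=
      countP_eq_zero.2 fun b hb => by
        simpa using hc.trans_le (hl.le_getElem_of_mem_drop hj hb)
    have htake : (l.take j).countP (· ≤ c) ≤ j := countP_le_length.trans (by simp)
    rw [← take_append_drop j l, countP_append, hdrop] at hcount
    omega

end List

theorem List.countP_mergeSort_ofFn {α : Type*} {n : ℕ} (y : Fin n → α) (r : α → α → Bool)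
    (p : α → Prop) [DecidablePred p] :
    ((List.ofFn y).mergeSort r).countP (fun x => decide (p x)) = #{i | p (y i)} := by
  rw [(List.mergeSort_perm _ _).countP_eq]
  induction n with
  | zero => simp
  | succ n ih =>
    by_cases h : p (y 0) <;> simp [List.ofFn_succ, Fin.card_filter_univ_succ, ih, h, add_comm]

noncomputable def sortedList {n : ℕ} (y : Fin n → ℝ) : List ℝ := (List.ofFn y).mergeSort (· ≤ ·)

noncomputable def kthSmallest {n : ℕ} (k : ℕ) (y : Fin n → ℝ) : ℝ := (sortedList y).getD (k - 1) 0

theorem orderStat_eq_kthSmallest {Ω : Type*} (n k : ℕ) (X : Fin n → Ω → ℝ) :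
    orderStat n k X = fun ω => kthSmallest k (X · ω) := rfl

section kthSmallest

variable {n k : ℕ}

theorem length_sortedList (y : Fin n → ℝ) : (sortedList y).length = n := by
  simp [sortedList]

theorem pairwise_sortedList (y : Fin n → ℝ) : (sortedList y).Pairwise (· ≤ ·) :=
  List.pairwise_mergeSort' _ _

theorem kthSmallest_eq_getElem (hk : 1 ≤ k) (hkn : k ≤ n) (y : Fin n → ℝ) :
    kthSmallest k y = (sortedList y)[k - 1]'(by rw [length_sortedList]; omega) :=
  List.getD_eq_getElem ..

theorem kthSmallest_le_iff (hk : 1 ≤ k) (hkn : k ≤ n) (y : Fin n → ℝ) (c : ℝ) :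
    kthSmallest k y ≤ c ↔ k ≤ #{i | y i ≤ c} := by
  rw [kthSmallest_eq_getElem hk hkn, (pairwise_sortedList y).getElem_le_iff,
    sortedList, List.countP_mergeSort_ofFn, Nat.sub_add_cancel hk]

theorem le_card_filter_kthSmallest_le (hk : 1 ≤ k) (hkn : k ≤ n) (y : Fin n → ℝ) :
    n - k + 1 ≤ #{i | kthSmallest k y ≤ y i} := by
  have h := (pairwise_sortedList y).length_sub_le_countP_getElem_le
    (j := k - 1) (by rw [length_sortedList]; omega)
  rw [← kthSmallest_eq_getElem hk hkn, length_sortedList, sortedList,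
    List.countP_mergeSort_ofFn] at h
  omega

theorem exists_eq_kthSmallest (hk : 1 ≤ k) (hkn : k ≤ n) (y : Fin n → ℝ) :
    ∃ i, y i = kthSmallest k y := by
  rw [← List.mem_ofFn, ← (List.mergeSort_perm _ _).mem_iff, kthSmallest_eq_getElem hk hkn]
  exact List.getElem_mem _

theorem abs_kthSmallest_le (hk : 1 ≤ k) (hkn : k ≤ n) (y : Fin n → ℝ) :
    |kthSmallest k y| ≤ ∑ i, |y i| := by
  obtain ⟨i, hi⟩ := exists_eq_kthSmallest hk hkn y
  exact hi ▸ single_le_sum (fun j _ => abs_nonneg (y j)) (mem_univ i)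

theorem measurable_kthSmallest (hk : 1 ≤ k) (hkn : k ≤ n) :
    Measurable (kthSmallest k : (Fin n → ℝ) → ℝ) := by
  refine measurable_of_Iic fun c => ?_
  have hcount : Measurable fun y : Fin n → ℝ => #{i | y i ≤ c} := by
    simp_rw [card_filter]
    exact Finset.measurable_sum _ fun i _ =>
      Measurable.ite (measurableSet_le (measurable_pi_apply i) measurable_const)
        measurable_const measurable_const
  simp_rw [Set.preimage, Set.mem_Iic, kthSmallest_le_iff hk hkn]
  exact hcount measurableSet_Ici

end kthSmallest

theorem card_mul_sq_le_card_compl_mul_sum_sq {ι : Type*} [Fintype ι] [DecidableEq ι]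
    {d : ι → ℝ} (hd : ∑ i, d i = 0) {s : Finset ι} {a : ℝ} (ha : 0 ≤ a)
    (hs : ∀ i ∈ s, a ≤ d i) :
    #s * Fintype.card ι * a ^ 2 ≤ #sᶜ * ∑ i, d i ^ 2 := by
  set S := ∑ i ∈ s, d i
  have hS : #s * a ≤ S := by simpa using card_nsmul_le_sum s d a hs
  have hSc : ∑ i ∈ sᶜ, d i = -S := by linarith [sum_add_sum_compl s d]
  have hsq : #s * a ^ 2 ≤ ∑ i ∈ s, d i ^ 2 := by
    simpa using card_nsmul_le_sum s (d · ^ 2) (a ^ 2) fun i hi => pow_le_pow_left₀ ha (hs i hi) 2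
  have hcsc : S ^ 2 ≤ #sᶜ * ∑ i ∈ sᶜ, d i ^ 2 := by
    simpa [hSc] using sq_sum_le_card_mul_sum_sq (s := sᶜ) (f := d)
  have hcard : (Fintype.card ι : ℝ) = #s + #sᶜ := by exact_mod_cast (card_add_card_compl s).symm
  rw [hcard, ← sum_add_sum_compl s fun i => d i ^ 2]
  have h0c : (0 : ℝ) ≤ #sᶜ := by positivity
  have hSq : (#s * a) ^ 2 ≤ S ^ 2 := pow_le_pow_left₀ (by positivity) hS 2
  nlinarith [mul_le_mul_of_nonneg_left hsq h0c]

theorem sum_sub_mean_eq_zero {n : ℕ} (y : Fin n → ℝ) : ∑ i, (y i - (∑ j, y j) / n) = 0 := by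
  rcases n.eq_zero_or_pos with rfl | hn
  · simp
  · rw [sum_sub_distrib, sum_const, card_univ, Fintype.card_fin, nsmul_eq_mul,
      mul_div_cancel₀ _ (by positivity), sub_self]

theorem kthSmallest_sub_mean_le {n k : ℕ} (hk : 1 ≤ k) (hkn : k ≤ n) (y : Fin n → ℝ) :
    kthSmallest k y - (∑ i, y i) / n ≤
      √(((k : ℝ) - 1) / ((n : ℝ) - k + 1)) * √((∑ i, (y i - (∑ j, y j) / n) ^ 2) / n) := by
  set t := kthSmallest k y
  set m := (∑ j, y j) / n
  rcases le_or_gt (t - m) 0 with hneg | hpos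
  · exact hneg.trans (by positivity)
  set s : Finset (Fin n) := {i | t ≤ y i}
  have hkey := card_mul_sq_le_card_compl_mul_sum_sq (sum_sub_mean_eq_zero y) hpos.le
    (s := s) fun i hi => by simp only [s, mem_filter] at hi; linarith [hi.2]
  have hs : (n : ℝ) - k + 1 ≤ #s := by
    have := le_card_filter_kthSmallest_le hk hkn y
    rw [← Nat.cast_le (α := ℝ), Nat.cast_add, Nat.cast_sub hkn] at this
    exact_mod_cast this
  have hsc : (#sᶜ : ℝ) ≤ k - 1 := by
    rw [card_compl, Fintype.card_fin, Nat.cast_sub ((card_le_univ s).trans_eq (Fintype.card_fin n))]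
    linarith
  have hk1 : (1 : ℝ) ≤ k := by exact_mod_cast hk
  have hkn' : (k : ℝ) ≤ n := by exact_mod_cast hkn
  rw [Fintype.card_fin] at hkey
  rw [← Real.sqrt_mul (div_nonneg (by linarith) (by linarith)), Real.le_sqrt' hpos,
    div_mul_div_comm, le_div_iff₀ (by nlinarith)]
  have hQ : 0 ≤ ∑ i, (y i - m) ^ 2 := by positivity
  nlinarith [mul_le_mul_of_nonneg_right hs (by positivity : (0 : ℝ) ≤ n * (t - m) ^ 2),
    mul_le_mul_of_nonneg_right hsc hQ]

theorem sum_sq_sub_mean_le {n : ℕ} (y : Fin n → ℝ) (c : ℝ) :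
    ∑ i, (y i - (∑ j, y j) / n) ^ 2 ≤ ∑ i, (y i - c) ^ 2 := by
  set m := (∑ j, y j) / n
  have hexpand : ∀ i, (y i - c) ^ 2 = (y i - m) ^ 2 + 2 * (m - c) * (y i - m) + (m - c) ^ 2 :=
    fun i => by ring
  have hcentered : ∑ i, (y i - m) = 0 := sum_sub_mean_eq_zero y
  simp_rw [hexpand, sum_add_distrib, ← mul_sum, hcentered, mul_zero, add_zero]
  exact le_add_of_nonneg_right (sum_nonneg fun i _ => sq_nonneg _)

theorem kthSmallest_le_mean_add {n k : ℕ} (hk : 1 ≤ k) (hkn : k ≤ n) (y : Fin n → ℝ) (c : ℝ) :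
    kthSmallest k y ≤
      (∑ i, y i) / n + √(((k : ℝ) - 1) / ((n : ℝ) - k + 1)) * √((∑ i, (y i - c) ^ 2) / n) := by
  have hspread :=
    Real.sqrt_le_sqrt (div_le_div_of_nonneg_right (sum_sq_sub_mean_le y c) n.cast_nonneg)
  linarith [kthSmallest_sub_mean_le hk hkn y, mul_le_mul_of_nonneg_left hspread (Real.sqrt_nonneg
    (((k : ℝ) - 1) / ((n : ℝ) - k + 1)))]

theorem MeasureTheory.Integrable.sqrt {Ω : Type*} [MeasurableSpace Ω] {P : Measure Ω}
    [IsFiniteMeasure P] {f : Ω → ℝ} (hf : Integrable f P) (hf0 : ∀ᵐ ω ∂P, 0 ≤ f ω) :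
    Integrable (fun ω => √(f ω)) P := by
  refine ((memLp_two_iff_integrable_sq ?_).2 ?_).integrable one_le_two
  · exact Real.continuous_sqrt.comp_aestronglyMeasurable hf.1
  · exact hf.congr (hf0.mono fun ω h => (Real.sq_sqrt h).symm)

theorem integral_sqrt_le_sqrt_integral {Ω : Type*} [MeasurableSpace Ω] {P : Measure Ω}
    [IsProbabilityMeasure P] {f : Ω → ℝ} (hf : Integrable f P) (hf0 : ∀ᵐ ω ∂P, 0 ≤ f ω) :
    ∫ ω, √(f ω) ∂P ≤ √(∫ ω, f ω ∂P) :=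
  Real.strictConcaveOn_sqrt.concaveOn.le_map_integral Real.continuous_sqrt.continuousOn
    isClosed_Ici hf0 hf (hf.sqrt hf0)

section SampleMoments

variable {Ω : Type*} [MeasurableSpace Ω] {P : Measure Ω} {n : ℕ} {X : Fin n → Ω → ℝ} {μ₀ σ : ℝ}

theorem integrable_orderStat {k : ℕ} (hk : 1 ≤ k) (hkn : k ≤ n) (hX : ∀ i, Integrable (X i) P) :
    Integrable (orderStat n k X) P := by
  rw [orderStat_eq_kthSmallest]
  have hmeas : AEStronglyMeasurable (fun ω => kthSmallest k (X · ω)) P :=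
    ((measurable_kthSmallest hk hkn).comp_aemeasurable
      (aemeasurable_pi_lambda _ fun i => (hX i).aemeasurable)).aestronglyMeasurable
  refine (integrable_finsetSum univ fun i _ => (hX i).abs).mono' hmeas (ae_of_all _ fun ω => ?_)
  rw [Real.norm_eq_abs]
  exact abs_kthSmallest_le hk hkn (X · ω)

theorem integral_sum_div_eq (hn : n ≠ 0) (hX : ∀ i, Integrable (X i) P)
    (hmean : ∀ i, ∫ ω, X i ω ∂P = μ₀) :
    ∫ ω, (∑ i, X i ω) / n ∂P = μ₀ := by
  simp [integral_div, integral_finsetSum univ fun i _ => hX i, hmean, hn]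

theorem integrable_sq_sub [IsFiniteMeasure P] (hX : ∀ i, MemLp (X i) 2 P) (c : ℝ) (i : Fin n) :
    Integrable (fun ω => (X i ω - c) ^ 2) P :=
  ((hX i).sub (memLp_const c)).integrable_sq

theorem integral_sum_sq_sub_div_eq [IsFiniteMeasure P] (hn : n ≠ 0) (hX : ∀ i, MemLp (X i) 2 P)
    (hmean : ∀ i, ∫ ω, X i ω ∂P = μ₀) (hvar : ∀ i, variance (X i) P = σ ^ 2) :
    ∫ ω, (∑ i, (X i ω - μ₀) ^ 2) / n ∂P = σ ^ 2 := by
  have hsq : ∀ i, ∫ ω, (X i ω - μ₀) ^ 2 ∂P = σ ^ 2 := fun i => by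
    rw [← hvar i, variance_eq_integral (hX i).aemeasurable, hmean i]
  simp [integral_div, integral_finsetSum univ fun i _ => integrable_sq_sub hX μ₀ i, hsq, hn]

end SampleMoments

theorem arnold_groeneveld_bound_general
    {Ω : Type*} [MeasurableSpace Ω] (P : Measure Ω) [IsProbabilityMeasure P]
    (n k : ℕ) (hk : 1 ≤ k) (hkn : k ≤ n) (μ₀ σ : ℝ) (hσ : 0 ≤ σ)
    (X : Fin n → Ω → ℝ)
    (hL2 : ∀ i, MemLp (X i) 2 P)
    (hmean : ∀ i, ∫ ω, X i ω ∂P = μ₀)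
    (hvar : ∀ i, variance (X i) P = σ ^ 2) :
    ∫ ω, orderStat n k X ω ∂P
      ≤ μ₀ + σ * Real.sqrt (((k : ℝ) - 1) / ((n : ℝ) - k + 1)) := by
  set C := √(((k : ℝ) - 1) / ((n : ℝ) - k + 1))
  set W : Ω → ℝ := fun ω => (∑ i, (X i ω - μ₀) ^ 2) / n
  have hn : n ≠ 0 := by omega
  have hX : ∀ i, Integrable (X i) P := fun i => (hL2 i).integrable one_le_two
  have hmean_int : Integrable (fun ω => (∑ i, X i ω) / n) P :=
    (integrable_finsetSum univ fun i _ => hX i).div_const _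
  have hW_int : Integrable W P :=
    (integrable_finsetSum univ fun i _ => integrable_sq_sub hL2 μ₀ i).div_const _
  have hW0 : ∀ᵐ ω ∂P, 0 ≤ W ω := ae_of_all _ fun ω => by positivity
  have hdev_int := (hW_int.sqrt hW0).const_mul C
  calc ∫ ω, orderStat n k X ω ∂P
      ≤ ∫ ω, ((∑ i, X i ω) / n + C * √(W ω)) ∂P :=
        integral_mono (integrable_orderStat hk hkn hX) (hmean_int.add hdev_int)
          fun ω => kthSmallest_le_mean_add hk hkn (X · ω) μ₀
    _ = μ₀ + C * ∫ ω, √(W ω) ∂P := by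
        rw [integral_add hmean_int hdev_int, integral_const_mul, integral_sum_div_eq hn hX hmean]
    _ ≤ μ₀ + C * √(∫ ω, W ω ∂P) := by gcongr; exact integral_sqrt_le_sqrt_integral hW_int hW0
    _ = μ₀ + σ * C := by rw [integral_sum_sq_sub_div_eq hn hL2 hmean hvar, Real.sqrt_sq hσ, mul_comm]

theorem arnold_groeneveld_bound
    {Ω : Type*} [MeasurableSpace Ω] (P : Measure Ω) [IsProbabilityMeasure P]
    (n k : ℕ) (hk : 1 ≤ k) (hkn : k ≤ n) (μ₀ σ : ℝ) (hσ : 0 ≤ σ)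
    (X : Fin n → Ω → ℝ) (hmeas : ∀ i, Measurable (X i))
    (hindep : iIndepFun X P)
    (hident : ∀ i j, IdentDistrib (X i) (X j) P P)
    (hL2 : ∀ i, MemLp (X i) 2 P)
    (hmean : ∀ i, ∫ ω, X i ω ∂P = μ₀)
    (hvar : ∀ i, variance (X i) P = σ ^ 2) :
    ∫ ω, orderStat n k X ω ∂P
      ≤ μ₀ + σ * Real.sqrt (((k : ℝ) - 1) / ((n : ℝ) - k + 1)) :=
  arnold_groeneveld_bound_general P n k hk hkn μ₀ σ hσ X hL2 hmean hvar
end
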